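/- arXiv:2404.01111 — 3 statements merged into one kernel-verified Lean document; each statement's English description precedes it below -/
import Mathlib

section
/- Let W be a finite alphabet, Π a probability distribution on W^n, and Γ a probability distribution on W such that ‖Π − Γ^{⊗n}‖_TV ≤ ε < 1/4. Then (1/n) Σ_{t=1}^n I_Π(W_t ; W^{t−1}) ≤ 4ε(log|W| + log(1/ε)), where I_Π(W_t; W^{t−1}) is the mutual information under Π between the t-th coordinate and the first t−1 coordinates. -/
open MeasureTheory Real

/-- Total variation distance between two measures. -/
noncomputable def tvDist {α : Type*} [MeasurableSpace α] (μ ν : Measure α) : ℝ :=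
  ⨆ s : {s : Set α // MeasurableSet s}, |(μ s.1).toReal - (ν s.1).toReal|

/-- Shannon entropy (base 2) of a distribution on a finite type. -/
noncomputable def entropy {α : Type*} [Fintype α] [MeasurableSpace α] (μ : Measure α) : ℝ :=
  -∑ x : α, (μ {x}).toReal * Real.logb 2 (μ {x}).toReal

/-- Shannon mutual information (base 2) between the two coordinates of a joint
distribution on a product of finite types. -/
noncomputable def mutualInfo {α β : Type*} [Fintype α] [MeasurableSpace α]
    [Fintype β] [MeasurableSpace β] (μ : Measure (α × β)) : ℝ :=
  entropy (μ.map Prod.fst) + entropy (μ.map Prod.snd) - entropy μ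

/-!
Write `H` for entropy in nats and `φ x = -x log x`. The mutual informations telescope,
`∑ₜ I(Wₜ ; W^{t-1}) = ∑ₜ H(Wₜ) - H(Wⁿ)`, and since `H(Γ^{⊗n}) = n H(Γ)` the right-hand side
is `∑ₜ (H(Wₜ) - H(Γ)) + (H(Γ^{⊗n}) - H(Wⁿ))`: a sum of `n + 1` entropy differences between
distributions at total variation distance at most `ε` (a coordinate projection does not
increase it). Fannes' inequality `|H μ - H ν| ≤ T log |α| + φ T`, for `T = ‖μ - ν‖₁ ≤ 2ε`,
bounds each difference by `2ε log |α| + 2ε log (1/ε)`, and `|Wⁿ| = |W|ⁿ` gives the total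
`4nε (log |W| + log (1/ε))`.
-/

namespace Real

lemma negMulLog_add_le {p d : ℝ} (hp : 0 ≤ p) (hd : 0 ≤ d) :
    negMulLog (p + d) ≤ negMulLog p + negMulLog d := by
  rcases hp.eq_or_lt with rfl | hp
  · simp
  rcases hd.eq_or_lt with rfl | hd
  · simp
  have hlp := mul_le_mul_of_nonneg_left (log_le_log hp (by linarith : p ≤ p + d)) hp.le
  have hld := mul_le_mul_of_nonneg_left (log_le_log hd (by linarith : d ≤ p + d)) hd.le
  simp only [negMulLog]
  linarith

lemma negMulLog_one_sub_le {d : ℝ} (hd : 0 ≤ d) (hd2 : d ≤ 1 / 2) :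
    negMulLog (1 - d) ≤ negMulLog d := by
  rcases hd.eq_or_lt with rfl | hd
  · simp
  have h1d : 0 < 1 - d := by linarith
  set r := d / (1 - d)
  have hr1 : r ≤ 1 := (div_le_one h1d).2 (by linarith)
  have hrd : r * (1 - d) = d := div_mul_cancel₀ d h1d.ne'
  -- `r` is chosen so that weighted AM-GM reads `d ^ r * 1 ^ (1 - r) ≤ r * d + (1 - r) = 1 - d`.
  have hpow : d ^ r ≤ 1 - d := by
    have := geom_mean_le_arith_mean2_weighted (by positivity) (sub_nonneg.2 hr1) hd.le
      zero_le_one (add_sub_cancel r 1)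
    rw [one_rpow, mul_one] at this
    linarith
  have hlog : r * log d ≤ log (1 - d) := by
    rw [← log_rpow hd]
    exact log_le_log (by positivity) hpow
  have := mul_le_mul_of_nonneg_left hlog h1d.le
  rw [← mul_assoc, mul_comm (1 - d), hrd] at this
  simp only [negMulLog]
  linarith

lemma monotoneOn_negMulLog_sub_negMulLog_add {d : ℝ} (hd : 0 ≤ d) :
    MonotoneOn (fun x ↦ negMulLog x - negMulLog (x + d)) (Set.Ici 0) := by
  have hderiv (x : ℝ) (hx : 0 < x) : HasDerivAt (fun x ↦ negMulLog x - negMulLog (x + d))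
      (log (x + d) - log x) x := by
    have := (hasDerivAt_negMulLog hx.ne').sub
      ((hasDerivAt_negMulLog (by positivity : x + d ≠ 0)).comp_add_const x d)
    rwa [show -log x - 1 - (-log (x + d) - 1) = log (x + d) - log x by ring] at this
  refine monotoneOn_of_deriv_nonneg (convex_Ici 0) (by fun_prop) (fun x hx ↦ ?_) (fun x hx ↦ ?_)
    <;> rw [interior_Ici] at hx
  · exact (hderiv x hx).differentiableAt.differentiableWithinAt
  · rw [(hderiv x hx).deriv]
    exact sub_nonneg.2 (log_le_log hx (by linarith))

lemma negMulLog_sub_negMulLog_add_le {p d : ℝ} (hp : 0 ≤ p) (hd : 0 ≤ d) (hd2 : d ≤ 1 / 2)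
    (hpd : p + d ≤ 1) : negMulLog p - negMulLog (p + d) ≤ negMulLog d :=
  calc negMulLog p - negMulLog (p + d) ≤ negMulLog (1 - d) - negMulLog (1 - d + d) :=
        monotoneOn_negMulLog_sub_negMulLog_add hd hp (show (0 : ℝ) ≤ 1 - d by linarith)
          (by linarith)
    _ = negMulLog (1 - d) := by simp
    _ ≤ negMulLog d := negMulLog_one_sub_le hd hd2

lemma abs_negMulLog_sub_negMulLog_le {p q : ℝ} (hp : 0 ≤ p) (hp1 : p ≤ 1) (hq : 0 ≤ q)
    (hq1 : q ≤ 1) (hpq : |p - q| ≤ 1 / 2) :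
    |negMulLog p - negMulLog q| ≤ negMulLog |p - q| := by
  wlog hle : p ≤ q generalizing p q
  · rw [abs_sub_comm (negMulLog p), abs_sub_comm p]
    exact this hq hq1 hp hp1 (by rwa [abs_sub_comm]) (by linarith)
  obtain ⟨d, hd, rfl⟩ : ∃ d, 0 ≤ d ∧ q = p + d := ⟨q - p, by linarith, by ring⟩
  rw [show p - (p + d) = -d by ring, abs_neg, abs_of_nonneg hd] at hpq ⊢
  rw [abs_le]
  exact ⟨by linarith [negMulLog_add_le hp hd], negMulLog_sub_negMulLog_add_le hp hd hpq hq1⟩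

lemma negMulLog_le_mul_log_one_div {ε k x : ℝ} (hε : 0 < ε) (hεe : ε ≤ exp (-1)) (hk : 1 ≤ k)
    (hx : 0 ≤ x) (hxk : x ≤ k * ε) : negMulLog x ≤ k * ε * log (1 / ε) := by
  have hL : 1 ≤ log (1 / ε) := by
    rw [one_div, log_inv, le_neg, ← log_exp (-1)]
    exact log_le_log hε hεe
  have hεL : ε * log (1 / ε) ≤ k * ε * log (1 / ε) := by
    rw [mul_assoc]
    exact le_mul_of_one_le_left (by positivity) hk
  rcases le_total x ε with hxε | hεx
  · have hsplit : negMulLog x = x * log (1 / ε) + ε * negMulLog (x / ε) := by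
      have := negMulLog_mul ε (x / ε)
      rw [mul_div_cancel₀ x hε.ne'] at this
      rw [this, negMulLog, one_div, log_inv]
      field_simp
    have h1 := mul_le_mul_of_nonneg_left (negMulLog_le_one_sub_self (div_nonneg hx hε.le)) hε.le
    rw [mul_sub, mul_one, mul_div_cancel₀ x hε.ne'] at h1
    nlinarith
  · have hsplit : negMulLog x = x * log (1 / x) := by rw [negMulLog, one_div, log_inv]; ring
    have hlog : log (1 / x) ≤ log (1 / ε) :=
      log_le_log (by have := hε.trans_le hεx; positivity) (one_div_le_one_div_of_le hε hεx)
    rw [hsplit]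
    nlinarith

lemma sum_negMulLog_le {ι : Type*} [Fintype ι] (f : ι → ℝ) (hf : ∀ i, 0 ≤ f i) :
    ∑ i, negMulLog (f i) ≤ (∑ i, f i) * log (Fintype.card ι) + negMulLog (∑ i, f i) := by
  rcases isEmpty_or_nonempty ι with hι | hι
  · simp
  set N : ℝ := (Fintype.card ι : ℝ)
  have hN : 0 < N := Nat.cast_pos.2 Fintype.card_pos
  have hjensen := concaveOn_negMulLog.le_map_sum (t := Finset.univ) (w := fun _ ↦ N⁻¹) (p := f)
    (fun _ _ ↦ by positivity) (by simp [N, Finset.card_univ]) fun i _ ↦ hf i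
  simp only [smul_eq_mul, ← Finset.mul_sum] at hjensen
  have hscale :
      N * negMulLog (N⁻¹ * ∑ i, f i) = (∑ i, f i) * log N + negMulLog (∑ i, f i) := by
    rw [negMulLog_mul, negMulLog, log_inv]
    field_simp
  calc ∑ i, negMulLog (f i) = N * (N⁻¹ * ∑ i, negMulLog (f i)) := by field_simp
    _ ≤ N * negMulLog (N⁻¹ * ∑ i, f i) := by gcongr
    _ = _ := hscale

end Real

noncomputable def entropyNats {α : Type*} [Fintype α] [MeasurableSpace α]
    (μ : Measure α) : ℝ :=
  ∑ x, negMulLog (μ.real {x})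

section Entropy

variable {α β : Type*} [Fintype α] [MeasurableSpace α] [Fintype β] [MeasurableSpace β]

lemma entropy_eq_entropyNats_div_log_two (μ : Measure α) :
    entropy μ = entropyNats μ / log 2 := by
  simp only [entropy, entropyNats, Finset.sum_div, ← Finset.sum_neg_distrib, negMulLog, logb,
    measureReal_def]
  congr 1 with x
  ring

lemma entropyNats_map_measurableEquiv (μ : Measure α) (e : α ≃ᵐ β) :
    entropyNats (μ.map e) = entropyNats μ := by
  have hpre (y : β) : e ⁻¹' {y} = {e.symm y} := Set.ext fun _ ↦ e.eq_symm_apply.symm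
  simp only [entropyNats, measureReal_def, e.map_apply, hpre]
  exact e.symm.toEquiv.sum_comp fun x ↦ negMulLog (μ {x}).toReal

lemma entropyNats_of_subsingleton [Subsingleton α] (μ : Measure α) [IsProbabilityMeasure μ] :
    entropyNats μ = 0 :=
  Finset.sum_eq_zero fun x _ ↦ by
    rw [show ({x} : Set α) = Set.univ from Set.eq_univ_of_forall fun y ↦ Subsingleton.elim y x,
      probReal_univ, negMulLog_one]

lemma abs_entropyNats_sub_le (μ ν : Measure α) [IsProbabilityMeasure μ]
    [IsProbabilityMeasure ν]
    (h : ∑ x, |μ.real {x} - ν.real {x}| ≤ 1 / 2) :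
    |entropyNats μ - entropyNats ν|
      ≤ (∑ x, |μ.real {x} - ν.real {x}|) * log (Fintype.card α)
      + negMulLog (∑ x, |μ.real {x} - ν.real {x}|) :=
  calc |entropyNats μ - entropyNats ν|
      = |∑ x, (negMulLog (μ.real {x}) - negMulLog (ν.real {x}))| := by
        rw [entropyNats, entropyNats, Finset.sum_sub_distrib]
    _ ≤ ∑ x, |negMulLog (μ.real {x}) - negMulLog (ν.real {x})| :=
        Finset.abs_sum_le_sum_abs _ _
    _ ≤ ∑ x, negMulLog |μ.real {x} - ν.real {x}| := Finset.sum_le_sum fun x _ ↦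
        abs_negMulLog_sub_negMulLog_le measureReal_nonneg measureReal_le_one measureReal_nonneg
          measureReal_le_one
          ((Finset.single_le_sum (fun y _ ↦ abs_nonneg _) (Finset.mem_univ x)).trans h)
    _ ≤ _ := sum_negMulLog_le _ fun _ ↦ abs_nonneg _

variable [MeasurableSingletonClass α] [MeasurableSingletonClass β]

lemma entropyNats_prod (μ : Measure α) (ν : Measure β) [IsProbabilityMeasure μ]
    [IsProbabilityMeasure ν] : entropyNats (μ.prod ν) = entropyNats μ + entropyNats ν := by
  simp only [entropyNats, Fintype.sum_prod_type, ← Set.singleton_prod_singleton,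
    measureReal_prod_prod, negMulLog_mul, Finset.sum_add_distrib, ← Finset.sum_mul,
    ← Finset.mul_sum, sum_measureReal_singleton]
  simp

lemma entropyNats_pi {n : ℕ} (μ : Measure α) [IsProbabilityMeasure μ] :
    entropyNats (Measure.pi fun _ : Fin n ↦ μ) = n * entropyNats μ := by
  induction n with
  | zero => simp [entropyNats_of_subsingleton]
  | succ n ih =>
    rw [← entropyNats_map_measurableEquiv _ (MeasurableEquiv.piFinSuccAbove (fun _ ↦ α) 0),
      (measurePreserving_piFinSuccAbove (fun _ : Fin (n + 1) ↦ μ) 0).map_eq, entropyNats_prod,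
      ih]
    push_cast
    ring

end Entropy

section TotalVariation

variable {α β : Type*} [MeasurableSpace α] [MeasurableSpace β]

lemma abs_measureReal_sub_le_tvDist (μ ν : Measure α) [IsProbabilityMeasure μ]
    [IsProbabilityMeasure ν] {s : Set α} (hs : MeasurableSet s) :
    |μ.real s - ν.real s| ≤ tvDist μ ν := by
  refine le_ciSup (f := fun s : {s : Set α // MeasurableSet s} ↦ |μ.real s.1 - ν.real s.1|)
    ⟨1, ?_⟩ ⟨s, hs⟩
  rintro _ ⟨t, rfl⟩
  exact abs_sub_le_of_nonneg_of_le measureReal_nonneg measureReal_le_one measureReal_nonneg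
    measureReal_le_one

lemma tvDist_comm (μ ν : Measure α) : tvDist μ ν = tvDist ν μ := by
  simp only [tvDist, abs_sub_comm]

lemma tvDist_map_le (μ ν : Measure α) [IsProbabilityMeasure μ] [IsProbabilityMeasure ν]
    {f : α → β} (hf : Measurable f) : tvDist (μ.map f) (ν.map f) ≤ tvDist μ ν :=
  ciSup_le fun ⟨s, hs⟩ ↦ by
    change |(μ.map f).real s - (ν.map f).real s| ≤ _
    rw [map_measureReal_apply hf hs, map_measureReal_apply hf hs]
    exact abs_measureReal_sub_le_tvDist μ ν (hf hs)

lemma sum_abs_sub_le_two_mul_tvDist [Fintype α] [MeasurableSingletonClass α] (μ ν : Measure α)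
    [IsProbabilityMeasure μ] [IsProbabilityMeasure ν] :
    ∑ x, |μ.real {x} - ν.real {x}| ≤ 2 * tvDist μ ν := by
  classical
  set S := Finset.univ.filter fun x ↦ 0 ≤ μ.real {x} - ν.real {x}
  have htotal : ∑ x, (μ.real {x} - ν.real {x}) = 0 := by simp [Finset.sum_sub_distrib]
  have habs (a : ℝ) : |a| = 2 * (if 0 ≤ a then a else 0) - a := by
    split_ifs with ha
    · rw [abs_of_nonneg ha]; ring
    · rw [abs_of_neg (not_le.1 ha)]; ring
  have hsplit : ∑ x, |μ.real {x} - ν.real {x}| = 2 * (μ.real S - ν.real S) := by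
    rw [Finset.sum_congr rfl fun x _ ↦ habs _, Finset.sum_sub_distrib, htotal, sub_zero,
      ← Finset.mul_sum, ← Finset.sum_filter, Finset.sum_sub_distrib, sum_measureReal_singleton,
      sum_measureReal_singleton]
  rw [hsplit]
  exact mul_le_mul_of_nonneg_left ((le_abs_self _).trans
    (abs_measureReal_sub_le_tvDist μ ν S.measurableSet)) zero_le_two

end TotalVariation

lemma abs_entropyNats_sub_le_of_tvDist_le {α : Type*} [Fintype α] [MeasurableSpace α]
    [MeasurableSingletonClass α] (μ ν : Measure α) [IsProbabilityMeasure μ]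
    [IsProbabilityMeasure ν] {ε : ℝ} (hε : 0 < ε) (hε4 : ε ≤ 1 / 4) (h : tvDist μ ν ≤ ε) :
    |entropyNats μ - entropyNats ν|
      ≤ 2 * ε * log (Fintype.card α) + 2 * ε * log (1 / ε) := by
  set T := ∑ x, |μ.real {x} - ν.real {x}|
  have hT : T ≤ 2 * ε := (sum_abs_sub_le_two_mul_tvDist μ ν).trans (by linarith)
  have hεe : ε ≤ exp (-1) := by
    rw [exp_neg]
    exact hε4.trans (by rw [one_div]; exact inv_anti₀ (exp_pos 1) (by linarith [exp_one_lt_d9]))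
  calc |entropyNats μ - entropyNats ν| ≤ T * log (Fintype.card α) + negMulLog T :=
        abs_entropyNats_sub_le μ ν (by linarith)
    _ ≤ _ := add_le_add (mul_le_mul_of_nonneg_right hT (log_natCast_nonneg _))
        (negMulLog_le_mul_log_one_div hε hεe one_le_two
          (Finset.sum_nonneg fun _ _ ↦ abs_nonneg _) hT)

lemma Fin.sum_succ_sub_castSucc {M : Type*} [AddCommGroup M] {n : ℕ} (f : Fin (n + 1) → M) :
    ∑ i : Fin n, (f i.succ - f i.castSucc) = f (Fin.last n) - f 0 := by
  induction n with
  | zero => simp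
  | succ n ih =>
    simp only [Fin.sum_univ_castSucc (n := n), Fin.succ_castSucc]
    rw [ih fun i ↦ f i.castSucc, Fin.succ_last, Fin.castSucc_zero]
    abel

lemma measurable_fin_take {W : Type*} [MeasurableSpace W] {n : ℕ} (m : ℕ) (h : m ≤ n) :
    Measurable (Fin.take m h : (Fin n → W) → _) :=
  measurable_pi_lambda _ fun _ ↦ measurable_pi_apply _

section ChainRule

variable {W : Type*} [Fintype W] [MeasurableSpace W] {n : ℕ}

lemma mutualInfo_map_eval_take (P : Measure (Fin n → W)) (t : Fin n) :
    mutualInfo (P.map fun w ↦ (w t, Fin.take t t.2.le w)) =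
      (entropyNats (P.map fun w ↦ w t) + entropyNats (P.map (Fin.take t t.2.le))
        - entropyNats (P.map (Fin.take (t + 1) t.2))) / log 2 := by
  have hmeas : Measurable fun w : Fin n → W ↦ (w t, Fin.take t t.2.le w) :=
    (measurable_pi_apply t).prodMk (measurable_fin_take _ _)
  have hjoint : P.map (fun w ↦ (w t, Fin.take t t.2.le w)) =
      (P.map (Fin.take (t + 1) t.2)).map
        (MeasurableEquiv.piFinSuccAbove (fun _ ↦ W) (Fin.last t)) := by
    rw [Measure.map_map (MeasurableEquiv.measurable _) (measurable_fin_take _ _)]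
    congr 1
    ext w i
    · rfl
    · simp [Fin.init, Fin.take]
  rw [mutualInfo, entropy_eq_entropyNats_div_log_two, entropy_eq_entropyNats_div_log_two,
    entropy_eq_entropyNats_div_log_two, Measure.map_map measurable_fst hmeas,
    Measure.map_map measurable_snd hmeas, hjoint, entropyNats_map_measurableEquiv]
  simp only [Function.comp_def]
  ring

lemma sum_mutualInfo_map_eval_take (P : Measure (Fin n → W)) [IsProbabilityMeasure P] :
    ∑ t : Fin n, mutualInfo (P.map fun w ↦ (w t, Fin.take t t.2.le w)) =
      (∑ t : Fin n, entropyNats (P.map fun w ↦ w t) - entropyNats P) / log 2 := by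
  let F : Fin (n + 1) → ℝ := fun k ↦ entropyNats (P.map (Fin.take k k.is_le))
  have hF0 : F 0 = 0 := by
    change entropyNats (P.map (Fin.take 0 (Nat.zero_le n) : (Fin n → W) → Fin 0 → W)) = 0
    have := Measure.isProbabilityMeasure_map (μ := P)
      (measurable_fin_take 0 (Nat.zero_le n)).aemeasurable
    exact entropyNats_of_subsingleton _
  have hFn : F (Fin.last n) = entropyNats P := by
    change entropyNats (P.map (Fin.take n le_rfl)) = _
    rw [funext (Fin.take_eq_self (α := fun _ ↦ W)), Measure.map_id']
  calc ∑ t : Fin n, mutualInfo (P.map fun w ↦ (w t, Fin.take t t.2.le w))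
      = ∑ t : Fin n, (entropyNats (P.map fun w ↦ w t) - (F t.succ - F t.castSucc)) / log 2 :=
        Finset.sum_congr rfl fun t _ ↦ by
          rw [mutualInfo_map_eval_take]
          change _ = (_ - (entropyNats (P.map (Fin.take (t + 1) t.2))
            - entropyNats (P.map (Fin.take t t.2.le)))) / log 2
          ring
    _ = _ := by
        rw [← Finset.sum_div, Finset.sum_sub_distrib, Fin.sum_succ_sub_castSucc, hF0, hFn,
          sub_zero]

end ChainRule

lemma sum_entropyNats_map_eval_sub_le {W : Type*} [Fintype W] [MeasurableSpace W]
    [MeasurableSingletonClass W] {n : ℕ} (hn : 0 < n) (P : Measure (Fin n → W))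
    [IsProbabilityMeasure P] (G : Measure W) [IsProbabilityMeasure G] {ε : ℝ} (hε : 0 < ε)
    (hε4 : ε ≤ 1 / 4) (hTV : tvDist P (Measure.pi fun _ ↦ G) ≤ ε) :
    ∑ t : Fin n, entropyNats (P.map fun w ↦ w t) - entropyNats P
      ≤ n * (4 * ε * log (Fintype.card W) + 4 * ε * log (1 / ε)) := by
  set Q := Measure.pi fun _ : Fin n ↦ G
  have hcoord (t : Fin n) : entropyNats (P.map fun w ↦ w t) - entropyNats G
      ≤ 2 * ε * log (Fintype.card W) + 2 * ε * log (1 / ε) := by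
    have := Measure.isProbabilityMeasure_map (μ := P) (measurable_pi_apply t).aemeasurable
    refine le_of_abs_le (abs_entropyNats_sub_le_of_tvDist_le _ _ hε hε4 ?_)
    rw [← (measurePreserving_eval (fun _ ↦ G) t).map_eq]
    exact (tvDist_map_le P Q (measurable_pi_apply t)).trans hTV
  have hjoint : entropyNats Q - entropyNats P
      ≤ 2 * ε * (n * log (Fintype.card W)) + 2 * ε * log (1 / ε) := by
    have := abs_entropyNats_sub_le_of_tvDist_le Q P hε hε4 (by rwa [tvDist_comm])
    rw [Fintype.card_fun, Fintype.card_fin, Nat.cast_pow, log_pow] at this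
    exact le_of_abs_le this
  have hQ : entropyNats Q = n * entropyNats G := entropyNats_pi G
  have hn1 : (1 : ℝ) ≤ n := Nat.one_le_cast.2 hn
  have hlog : 0 ≤ 2 * ε * log (1 / ε) :=
    mul_nonneg (by positivity) (log_nonneg (by rw [le_div_iff₀ hε]; linarith))
  calc ∑ t : Fin n, entropyNats (P.map fun w ↦ w t) - entropyNats P
      = ∑ t : Fin n, (entropyNats (P.map fun w ↦ w t) - entropyNats G)
        + (entropyNats Q - entropyNats P) := by
        rw [Finset.sum_sub_distrib, hQ, Finset.sum_const, Finset.card_univ, Fintype.card_fin,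
          nsmul_eq_mul]
        ring
    _ ≤ n * (2 * ε * log (Fintype.card W) + 2 * ε * log (1 / ε))
        + (2 * ε * (n * log (Fintype.card W)) + 2 * ε * log (1 / ε)) := by
        refine add_le_add ((Finset.sum_le_sum fun t _ ↦ hcoord t).trans_eq ?_) hjoint
        rw [Finset.sum_const, Finset.card_univ, Fintype.card_fin, nsmul_eq_mul]
    _ ≤ n * (4 * ε * log (Fintype.card W) + 4 * ε * log (1 / ε)) := by
        nlinarith

/-- Nearly-i.i.d. lemma: if the law Π of W^n is ε-close in TV to an i.i.d. product Γ^{⊗n}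
with ε < 1/4, then (1/n) Σ_t I(W_t ; W^{t−1}) ≤ 4ε(log|W| + log(1/ε)). -/
theorem stmt_4 {W : Type*} [Fintype W] [MeasurableSpace W] [MeasurableSingletonClass W]
    {n : ℕ} (hn : 0 < n)
    (P : Measure (Fin n → W)) [IsProbabilityMeasure P]
    (G : Measure W) [IsProbabilityMeasure G]
    (ε : ℝ) (hε0 : 0 < ε) (hε : ε < 1 / 4)
    (hTV : tvDist P (Measure.pi fun _ => G) ≤ ε) :
    (1 / n : ℝ) * ∑ t : Fin n,
        mutualInfo (P.map fun w => (w t, fun i : Fin t => w (Fin.castLE t.2.le i)))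
      ≤ 4 * ε * (Real.logb 2 (Fintype.card W) + Real.logb 2 (1 / ε)) := by
  have hn' : (0 : ℝ) < n := Nat.cast_pos.2 hn
  calc (1 / n : ℝ) * ∑ t : Fin n,
        mutualInfo (P.map fun w => (w t, fun i : Fin t => w (Fin.castLE t.2.le i)))
      = 1 / n * ((∑ t : Fin n, entropyNats (P.map fun w ↦ w t) - entropyNats P) / log 2) :=
        congrArg _ (sum_mutualInfo_map_eval_take P)
    _ ≤ 1 / n * (n * (4 * ε * log (Fintype.card W) + 4 * ε * log (1 / ε)) / log 2) := by
        gcongr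
        exact sum_entropyNats_map_eval_sub_le hn P G hε0 hε.le hTV
    _ = 4 * ε * (logb 2 (Fintype.card W) + logb 2 (1 / ε)) := by
        rw [logb, logb]
        field_simp
end

section
/- Let X be a finite-dimensional real vector space and d the Euclidean distance. For any distribution p on X and any s > 0, the pair (d^s, p) is quantizable: there exists a sequence of measurable finite-valued quantizers κ^{(ℓ)} : X → X whose induced partitions asymptotically generate the Borel σ-algebra, such that for all τ, ε > 0 there is a Borel set B_τ with p(X \ B_τ) ≤ τ and an index L_{ε,τ} with: for all ℓ ≥ L_{ε,τ}, (i) |d(x,y)^s − d(κ^{(ℓ)}(x), κ^{(ℓ)}(y))^s| ≤ ε for all (x,y) ∈ B_τ², and (ii) d(κ^{(ℓ)}(x), κ^{(ℓ)}(y))^s ≤ d(x,y)^s + ε for all (x,y) ∉ B_τ². -/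
open MeasureTheory Real

/-!
The quantizer `κ_ℓ` clamps every coordinate to `[-ℓ, ℓ]`, rounds it down to a grid so fine that
points move by at most `θ²` in norm, where `θ = 1 / (ℓ + 1)`, and finally contracts by `1 - θ`.
Clamping is `1`-Lipschitz, so `d(κx, κy) ≤ (1 - θ) (d(x, y) + 2θ²) ≤ max (d(x, y)) (2θ)`, whence
`d(κx, κy)^s ≤ d(x, y)^s + (2θ)^s` for all pairs; without the contraction this would fail for
`s > 1` at large distances. On the ball of radius `n ≤ ℓ` clamping does nothing, so `d(κx, κy)`
is uniformly `O(θ)`-close to `d(x, y)` there, and uniform continuity of `t ↦ t^s` on compact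
intervals gives the approximation on a ball carrying all but `τ` of the mass. Finally the fibre
of `κ_ℓ` through a fixed point has diameter `O(θ²)` once `ℓ` is large, so every open set is a
countable union of fibres.
-/

open Filter Topology Metric Set

lemma mul_add_le_max_div {θ δ t : ℝ} (hθ : 0 < θ) (hθ1 : θ ≤ 1) (hδ : 0 ≤ δ) :
    (1 - θ) * (t + δ) ≤ max t (δ / θ) := by
  rcases le_or_gt ((1 - θ) * δ / θ) t with h | h
  · rw [div_le_iff₀ hθ] at h
    exact le_max_of_le_left (by nlinarith)
  · rw [lt_div_iff₀ hθ] at h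
    refine le_max_of_le_right ?_
    rw [le_div_iff₀ hθ]
    nlinarith

lemma rpow_le_rpow_add_rpow_of_le_max {s t u η : ℝ} (hs : 0 ≤ s) (ht : 0 ≤ t) (hu : 0 ≤ u)
    (hη : 0 ≤ η) (h : u ≤ max t η) : u ^ s ≤ t ^ s + η ^ s := by
  rcases le_total t η with htη | hηt
  · rw [max_eq_right htη] at h
    linarith [rpow_le_rpow hu h hs, rpow_nonneg ht s]
  · rw [max_eq_left hηt] at h
    linarith [rpow_le_rpow hu h hs, rpow_nonneg hη s]

lemma exists_pos_forall_abs_rpow_sub_rpow_le {s : ℝ} (hs : 0 ≤ s) (M : ℝ) {ε : ℝ} (hε : 0 < ε) :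
    ∃ δ > 0, ∀ t ∈ Icc 0 M, ∀ u ∈ Icc 0 M, |t - u| < δ → |t ^ s - u ^ s| ≤ ε := by
  obtain ⟨δ, hδ, h⟩ := Metric.uniformContinuousOn_iff.1
    (isCompact_Icc.uniformContinuousOn_of_continuous (continuous_rpow_const hs).continuousOn) ε hε
  exact ⟨δ, hδ, fun t ht u hu htu => (h t ht u hu htu).le⟩

def symmClamp (r t : ℝ) : ℝ := max (-r) (min r t)

lemma abs_symmClamp_sub_symmClamp_le (r t u : ℝ) :
    |symmClamp r t - symmClamp r u| ≤ |t - u| :=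
  (abs_max_sub_max_le_max _ _ _ _).trans <| max_le (by simp) <|
    (abs_min_sub_min_le_max _ _ _ _).trans (max_le (by simp) le_rfl)

lemma symmClamp_mem_Icc {r : ℝ} (hr : 0 ≤ r) (t : ℝ) : symmClamp r t ∈ Icc (-r) r :=
  ⟨le_max_left _ _, max_le (by linarith) (min_le_left _ _)⟩

lemma symmClamp_of_abs_le {r t : ℝ} (h : |t| ≤ r) : symmClamp r t = t := by
  rw [abs_le] at h
  rw [symmClamp, min_eq_right h.2, max_eq_right h.1]

lemma symmClamp_of_abs_symmClamp_lt {r t : ℝ} (h : |symmClamp r t| < r) : symmClamp r t = t := by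
  rw [symmClamp, abs_lt] at *
  grind

@[fun_prop]
lemma measurable_symmClamp (r : ℝ) : Measurable (symmClamp r) := by
  unfold symmClamp
  fun_prop

noncomputable def floorGrid (N t : ℝ) : ℝ := ⌊N * t⌋ / N

lemma abs_floorGrid_sub_le {N : ℝ} (hN : 0 < N) (t : ℝ) : |floorGrid N t - t| ≤ 1 / N := by
  have hfloor : |(⌊N * t⌋ : ℝ) - N * t| ≤ 1 := by
    rw [abs_le]
    constructor <;> linarith [Int.floor_le (N * t), Int.lt_floor_add_one (N * t)]
  calc |floorGrid N t - t| = |(⌊N * t⌋ : ℝ) - N * t| / N := by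
        rw [floorGrid, ← abs_of_pos hN, ← abs_div, abs_of_pos hN, sub_div,
          mul_div_cancel_left₀ _ hN.ne']
    _ ≤ 1 / N := by gcongr

lemma finite_floorGrid_image_Icc {N : ℝ} (hN : 0 ≤ N) (a b : ℝ) :
    (floorGrid N '' Icc a b).Finite := by
  refine ((finite_Icc ⌊N * a⌋ ⌊N * b⌋).image fun m : ℤ => (m : ℝ) / N).subset ?_
  rintro _ ⟨t, ht, rfl⟩
  exact ⟨⌊N * t⌋, ⟨Int.floor_mono (by gcongr; exact ht.1), Int.floor_mono (by gcongr; exact ht.2)⟩,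
    rfl⟩

@[fun_prop]
lemma measurable_floorGrid (N : ℝ) : Measurable (floorGrid N) := by
  unfold floorGrid
  fun_prop

namespace EuclideanSpace

variable {ι : Type*} [Fintype ι]

lemma dist_le_sqrt_card_mul {x y : EuclideanSpace ℝ ι} {c : ℝ} (hc : 0 ≤ c)
    (h : ∀ i, dist (x i) (y i) ≤ c) : dist x y ≤ √(Fintype.card ι) * c := by
  calc dist x y ≤ √(∑ _i : ι, c ^ 2) := by
        rw [dist_eq]
        gcongr with i
        exact h i
    _ = √(Fintype.card ι) * c := by
        rw [Finset.sum_const, Finset.card_univ, nsmul_eq_mul, sqrt_mul (by positivity), sqrt_sq hc]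

lemma dist_le_dist_of_forall_dist_le {x y x' y' : EuclideanSpace ℝ ι}
    (h : ∀ i, dist (x i) (y i) ≤ dist (x' i) (y' i)) : dist x y ≤ dist x' y' := by
  rw [dist_eq, dist_eq]
  gcongr with i
  exact h i

end EuclideanSpace

lemma iSup_comap_eq_of_forall_fiber_dist_lt {ι X Y : Type*} [Countable ι] [PseudoMetricSpace X]
    [MeasurableSpace X] [BorelSpace X] [mY : MeasurableSpace Y] [MeasurableSingletonClass Y]
    {f : ι → X → Y} (hf : ∀ i, Measurable (f i)) (hrange : ∀ i, (range (f i)).Countable)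
    (hfiber : ∀ x, ∀ ρ > 0, ∃ i, ∀ z, f i z = f i x → dist z x < ρ) :
    ⨆ i, MeasurableSpace.comap (f i) mY = ‹MeasurableSpace X› := by
  refine le_antisymm (iSup_le fun i => (hf i).comap_le) ?_
  refine (BorelSpace.measurable_eq (α := X)).le.trans <| MeasurableSpace.generateFrom_le
    fun U hU => ?_
  have hU : U = ⋃ i, f i ⁻¹' ({v | f i ⁻¹' {v} ⊆ U} ∩ range (f i)) := by
    ext x
    simp only [mem_iUnion, mem_preimage, mem_inter_iff, mem_ofPred_eq, mem_range_self, and_true]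
    refine ⟨fun hx => ?_, fun ⟨i, hi⟩ => hi rfl⟩
    obtain ⟨ρ, hρ, hball⟩ := Metric.isOpen_iff.1 hU x hx
    obtain ⟨i, hi⟩ := hfiber x ρ hρ
    exact ⟨i, fun z hz => hball (hi z hz)⟩
  rw [hU]
  exact MeasurableSet.iUnion fun i => le_iSup (fun i => MeasurableSpace.comap (f i) mY) i _
    ⟨_, ((hrange i).mono inter_subset_right).measurableSet, rfl⟩

lemma tendsto_measure_compl_closedBall_nat {X : Type*} [PseudoMetricSpace X] [MeasurableSpace X]
    [OpensMeasurableSpace X] (μ : Measure X) [IsFiniteMeasure μ] (c : X) :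
    Tendsto (fun n : ℕ => μ (closedBall c n)ᶜ) atTop (𝓝 0) := by
  have h := tendsto_measure_iInter_atTop (μ := μ) (s := fun n : ℕ => (closedBall c n)ᶜ)
    (fun _ => measurableSet_closedBall.compl.nullMeasurableSet)
    (fun _ _ hmn => compl_subset_compl.2 (closedBall_subset_closedBall (by exact_mod_cast hmn)))
    ⟨0, measure_ne_top μ _⟩
  rwa [← compl_iUnion, iUnion_closedBall_nat, compl_univ, measure_empty] at h

section CubeQuantizer

variable {ι : Type*} [Fintype ι]

noncomputable def cubeClamp (ℓ : ℕ) (x : EuclideanSpace ℝ ι) : EuclideanSpace ℝ ι :=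
  WithLp.toLp 2 fun i => symmClamp ℓ (x i)

-- large enough that rounding every coordinate down moves a point by at most `(ℓ + 1)⁻²`
noncomputable def gridMesh (ι : Type*) [Fintype ι] (ℓ : ℕ) : ℝ :=
  (ℓ + 1) ^ 2 * (Fintype.card ι + 1)

noncomputable def cubeGrid (ℓ : ℕ) (x : EuclideanSpace ℝ ι) : EuclideanSpace ℝ ι :=
  WithLp.toLp 2 fun i => floorGrid (gridMesh ι ℓ) (cubeClamp ℓ x i)

noncomputable def cubeQuantizer (ℓ : ℕ) (x : EuclideanSpace ℝ ι) : EuclideanSpace ℝ ι :=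
  (1 - 1 / (ℓ + 1 : ℝ)) • cubeGrid ℓ x

variable (ℓ : ℕ)

lemma gridMesh_pos : 0 < gridMesh ι ℓ := by
  unfold gridMesh
  positivity

lemma dist_cubeClamp_le (x y : EuclideanSpace ℝ ι) :
    dist (cubeClamp ℓ x) (cubeClamp ℓ y) ≤ dist x y :=
  EuclideanSpace.dist_le_dist_of_forall_dist_le fun _ => abs_symmClamp_sub_symmClamp_le _ _ _

lemma cubeClamp_eq_self {x : EuclideanSpace ℝ ι} (hx : ‖x‖ ≤ ℓ) : cubeClamp ℓ x = x :=
  WithLp.ofLp_injective 2 <| funext fun i =>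
    symmClamp_of_abs_le <| (PiLp.norm_apply_le x i).trans hx

lemma dist_cubeGrid_cubeClamp_le (x : EuclideanSpace ℝ ι) :
    dist (cubeGrid ℓ x) (cubeClamp ℓ x) ≤ (1 / (ℓ + 1 : ℝ)) ^ 2 := by
  have hN := gridMesh_pos (ι := ι) ℓ
  calc dist (cubeGrid ℓ x) (cubeClamp ℓ x) ≤ √(Fintype.card ι) * (1 / gridMesh ι ℓ) :=
        EuclideanSpace.dist_le_sqrt_card_mul (by positivity) fun _ =>
          abs_floorGrid_sub_le hN _
    _ ≤ (Fintype.card ι + 1) * (1 / gridMesh ι ℓ) := by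
        gcongr
        calc √(Fintype.card ι) ≤ √((Fintype.card ι + 1) ^ 2) := by gcongr; nlinarith
          _ = _ := sqrt_sq (by positivity)
    _ = (1 / (ℓ + 1 : ℝ)) ^ 2 := by
        unfold gridMesh
        field_simp

lemma dist_cubeGrid_le (x y : EuclideanSpace ℝ ι) :
    dist (cubeGrid ℓ x) (cubeGrid ℓ y) ≤ dist x y + 2 * (1 / (ℓ + 1 : ℝ)) ^ 2 := by
  have := dist_triangle4 (cubeGrid ℓ x) (cubeClamp ℓ x) (cubeClamp ℓ y) (cubeGrid ℓ y)
  linarith [dist_cubeGrid_cubeClamp_le ℓ x, dist_cubeGrid_cubeClamp_le ℓ y,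
    dist_comm (cubeGrid ℓ y) (cubeClamp ℓ y), dist_cubeClamp_le ℓ x y]

lemma dist_le_dist_cubeGrid {x y : EuclideanSpace ℝ ι} (hx : ‖x‖ ≤ ℓ) (hy : ‖y‖ ≤ ℓ) :
    dist x y ≤ dist (cubeGrid ℓ x) (cubeGrid ℓ y) + 2 * (1 / (ℓ + 1 : ℝ)) ^ 2 := by
  have hxg := dist_cubeGrid_cubeClamp_le ℓ x
  have hyg := dist_cubeGrid_cubeClamp_le ℓ y
  rw [cubeClamp_eq_self ℓ hx] at hxg
  rw [cubeClamp_eq_self ℓ hy] at hyg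
  have := dist_triangle4 x (cubeGrid ℓ x) (cubeGrid ℓ y) y
  linarith [dist_comm x (cubeGrid ℓ x)]

lemma dist_cubeQuantizer (x y : EuclideanSpace ℝ ι) :
    dist (cubeQuantizer ℓ x) (cubeQuantizer ℓ y) =
      (1 - 1 / (ℓ + 1 : ℝ)) * dist (cubeGrid ℓ x) (cubeGrid ℓ y) := by
  have hθ : 1 / (ℓ + 1 : ℝ) ≤ 1 := div_le_one_of_le₀ (by simp) (by positivity)
  rw [cubeQuantizer, cubeQuantizer, dist_smul₀, norm_of_nonneg (by linarith)]

lemma dist_cubeQuantizer_le_max (x y : EuclideanSpace ℝ ι) :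
    dist (cubeQuantizer ℓ x) (cubeQuantizer ℓ y) ≤ max (dist x y) (2 * (1 / (ℓ + 1 : ℝ))) := by
  have hθ : 1 / (ℓ + 1 : ℝ) ≤ 1 := div_le_one_of_le₀ (by simp) (by positivity)
  have hθ1 : 1 - 1 / (ℓ + 1 : ℝ) ≥ 0 := by linarith
  calc dist (cubeQuantizer ℓ x) (cubeQuantizer ℓ y)
      ≤ (1 - 1 / (ℓ + 1 : ℝ)) * (dist x y + 2 * (1 / (ℓ + 1 : ℝ)) ^ 2) := by
        rw [dist_cubeQuantizer]; gcongr; exact dist_cubeGrid_le ℓ x y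
    _ ≤ max (dist x y) (2 * (1 / (ℓ + 1 : ℝ)) ^ 2 / (1 / (ℓ + 1 : ℝ))) :=
        mul_add_le_max_div (by positivity) hθ (by positivity)
    _ = max (dist x y) (2 * (1 / (ℓ + 1 : ℝ))) := by
        congr 1; field_simp

lemma abs_dist_sub_dist_cubeQuantizer_le {x y : EuclideanSpace ℝ ι} (hx : ‖x‖ ≤ ℓ)
    (hy : ‖y‖ ≤ ℓ) :
    |dist x y - dist (cubeQuantizer ℓ x) (cubeQuantizer ℓ y)| ≤
      1 / (ℓ + 1 : ℝ) * (dist x y + 4) := by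
  set θ := 1 / (ℓ + 1 : ℝ)
  have hθ0 : 0 < θ := by positivity
  have hθ1 : θ ≤ 1 := div_le_one_of_le₀ (by simp) (by positivity)
  have hup := dist_cubeGrid_le ℓ x y
  have hlow := dist_le_dist_cubeGrid ℓ hx hy
  have hD := dist_nonneg (x := cubeGrid ℓ x) (y := cubeGrid ℓ y)
  have ht := dist_nonneg (x := x) (y := y)
  rw [dist_cubeQuantizer, abs_le]
  constructor <;>
    nlinarith [mul_le_mul_of_nonneg_left hup hθ0.le, mul_le_mul_of_nonneg_left hθ1 hθ0.le]

lemma dist_le_of_cubeQuantizer_eq {x z : EuclideanSpace ℝ ι} (hx : ‖x‖ + 1 ≤ ℓ)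
    (h : cubeQuantizer ℓ z = cubeQuantizer ℓ x) : dist z x ≤ 2 * (1 / (ℓ + 1 : ℝ)) ^ 2 := by
  have hℓ : (1 : ℝ) ≤ ℓ := by linarith [norm_nonneg x]
  have hθ : 1 / (ℓ + 1 : ℝ) ≤ 1 / 2 := by gcongr; linarith
  have hgrid : cubeGrid ℓ z = cubeGrid ℓ x := by
    refine smul_right_injective _ ?_ h
    linarith [show 0 < 1 / (ℓ + 1 : ℝ) by positivity]
  have hxc : cubeClamp ℓ x = x := cubeClamp_eq_self ℓ (by linarith)
  have hclamp : dist (cubeClamp ℓ z) x ≤ 2 * (1 / (ℓ + 1 : ℝ)) ^ 2 := by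
    calc dist (cubeClamp ℓ z) x = dist (cubeClamp ℓ z) (cubeClamp ℓ x) := by rw [hxc]
      _ ≤ dist (cubeGrid ℓ z) (cubeClamp ℓ z) + dist (cubeGrid ℓ x) (cubeClamp ℓ x) := by
        rw [dist_comm (cubeGrid ℓ z), ← hgrid]; exact dist_triangle _ _ _
      _ ≤ _ := by linarith [dist_cubeGrid_cubeClamp_le ℓ z, dist_cubeGrid_cubeClamp_le ℓ x]
  have hz : cubeClamp ℓ z = z := by
    refine WithLp.ofLp_injective 2 <| funext fun i => symmClamp_of_abs_symmClamp_lt ?_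
    -- the clamped coordinate stays within distance `< 1` of `x i`, which is `≤ ℓ - 1`
    have hzi := (PiLp.dist_apply_le (cubeClamp ℓ z) x i).trans hclamp
    have hxi := PiLp.norm_apply_le x i
    rw [Real.dist_eq] at hzi
    rw [Real.norm_eq_abs] at hxi
    have : (1 / (ℓ + 1 : ℝ)) ^ 2 ≤ 1 / 4 := by nlinarith [show 0 < 1 / (ℓ + 1 : ℝ) by positivity]
    have := abs_sub_abs_le_abs_sub (cubeClamp ℓ z i) (x i)
    change |cubeClamp ℓ z i| < ℓ
    linarith
  rwa [hz] at hclamp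

lemma measurable_cubeQuantizer : Measurable (cubeQuantizer (ι := ι) ℓ) := by
  unfold cubeQuantizer cubeGrid cubeClamp
  fun_prop

lemma finite_range_cubeGrid : (range (cubeGrid (ι := ι) ℓ)).Finite := by
  refine ((Set.Finite.pi fun _ => finite_floorGrid_image_Icc (gridMesh_pos (ι := ι) ℓ).le
    (-ℓ) ℓ).image (WithLp.toLp 2)).subset ?_
  rintro _ ⟨x, rfl⟩
  exact ⟨_, fun i _ => ⟨_, symmClamp_mem_Icc ℓ.cast_nonneg _, rfl⟩, rfl⟩

lemma finite_range_cubeQuantizer : (range (cubeQuantizer (ι := ι) ℓ)).Finite := by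
  rw [show cubeQuantizer ℓ = ((1 - 1 / (ℓ + 1 : ℝ)) • ·) ∘ cubeGrid (ι := ι) ℓ from rfl,
    range_comp]
  exact (finite_range_cubeGrid ℓ).image _

lemma iSup_comap_cubeQuantizer :
    ⨆ ℓ : ℕ, MeasurableSpace.comap (cubeQuantizer ℓ)
        (inferInstance : MeasurableSpace (EuclideanSpace ℝ ι)) =
      (inferInstance : MeasurableSpace (EuclideanSpace ℝ ι)) := by
  refine iSup_comap_eq_of_forall_fiber_dist_lt measurable_cubeQuantizer
    (fun ℓ => (finite_range_cubeQuantizer ℓ).countable) fun x ρ hρ => ?_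
  have hsmall : Tendsto (fun ℓ : ℕ => 2 * (1 / (ℓ + 1 : ℝ)) ^ 2) atTop (𝓝 0) := by
    simpa using (tendsto_one_div_add_atTop_nhds_zero_nat.pow 2).const_mul (2 : ℝ)
  obtain ⟨ℓ, hℓρ, hℓx⟩ := ((hsmall.eventually (gt_mem_nhds hρ)).and
    (tendsto_natCast_atTop_atTop.eventually_ge_atTop (‖x‖ + 1))).exists
  exact ⟨ℓ, fun z hz => (dist_le_of_cubeQuantizer_eq ℓ hℓx hz).trans_lt hℓρ⟩

lemma eventually_abs_dist_rpow_sub_dist_cubeQuantizer_rpow_le {s ε : ℝ} (hs : 0 ≤ s) (hε : 0 < ε)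
    (n : ℕ) : ∀ᶠ ℓ in atTop, ∀ x ∈ closedBall (0 : EuclideanSpace ℝ ι) n,
      ∀ y ∈ closedBall (0 : EuclideanSpace ℝ ι) n,
        |dist x y ^ s - dist (cubeQuantizer ℓ x) (cubeQuantizer ℓ y) ^ s| ≤ ε := by
  obtain ⟨δ, hδ, hcont⟩ := exists_pos_forall_abs_rpow_sub_rpow_le hs (2 * n + 2) hε
  have hsmall : Tendsto (fun ℓ : ℕ => 1 / (ℓ + 1 : ℝ) * (2 * n + 4)) atTop (𝓝 0) := by
    simpa using tendsto_one_div_add_atTop_nhds_zero_nat.mul_const (2 * (n : ℝ) + 4)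
  filter_upwards [hsmall.eventually (gt_mem_nhds hδ), eventually_ge_atTop n]
    with ℓ hℓδ hnℓ x hx y hy
  rw [mem_closedBall_zero_iff] at hx hy
  have hnℓ' : (n : ℝ) ≤ ℓ := by exact_mod_cast hnℓ
  have hxy : dist x y ≤ 2 * n := by linarith [dist_le_norm_add_norm x y]
  have hθ : 1 / (ℓ + 1 : ℝ) ≤ 1 := div_le_one_of_le₀ (by simp) (by positivity)
  refine hcont _ ⟨dist_nonneg, by linarith⟩ _ ⟨dist_nonneg, ?_⟩ ?_
  · exact (dist_cubeQuantizer_le_max ℓ x y).trans (max_le (by linarith) (by linarith))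
  · refine (abs_dist_sub_dist_cubeQuantizer_le ℓ (hx.trans hnℓ') (hy.trans hnℓ')).trans_lt ?_
    exact lt_of_le_of_lt (by gcongr) hℓδ

lemma eventually_dist_cubeQuantizer_rpow_le {s ε : ℝ} (hs : 0 < s) (hε : 0 < ε) :
    ∀ᶠ ℓ in atTop, ∀ x y : EuclideanSpace ℝ ι,
      dist (cubeQuantizer ℓ x) (cubeQuantizer ℓ y) ^ s ≤ dist x y ^ s + ε := by
  have hsmall : Tendsto (fun ℓ : ℕ => (2 * (1 / (ℓ + 1 : ℝ))) ^ s) atTop (𝓝 0) := by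
    have h2θ : Tendsto (fun ℓ : ℕ => 2 * (1 / (ℓ + 1 : ℝ))) atTop (𝓝 0) := by
      simpa using tendsto_one_div_add_atTop_nhds_zero_nat.const_mul (2 : ℝ)
    simpa [Function.comp_def, zero_rpow hs.ne'] using
      ((continuous_rpow_const hs.le).tendsto 0).comp h2θ
  filter_upwards [hsmall.eventually (ge_mem_nhds hε)] with ℓ hℓ x y
  have := rpow_le_rpow_add_rpow_of_le_max hs.le dist_nonneg dist_nonneg (by positivity)
    (dist_cubeQuantizer_le_max ℓ x y)
  linarith

end CubeQuantizer

/-- For Euclidean space with distance d, any distribution p and any s > 0, the pair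
(d^s, p) is quantizable: there is a sequence of measurable finite-valued quantizers
whose partitions asymptotically generate the Borel σ-algebra and which approximate
the distortion d^s as in the definition of quantizability. -/
theorem stmt_10 (k : ℕ) (p : Measure (EuclideanSpace ℝ (Fin k)))
    [IsProbabilityMeasure p] (s : ℝ) (hs : 0 < s) :
    ∃ κ : ℕ → EuclideanSpace ℝ (Fin k) → EuclideanSpace ℝ (Fin k),
      (∀ ℓ, Measurable (κ ℓ) ∧ (Set.range (κ ℓ)).Finite) ∧
      (⨆ ℓ : ℕ, MeasurableSpace.comap (κ ℓ) inferInstance) =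
        (inferInstance : MeasurableSpace (EuclideanSpace ℝ (Fin k))) ∧
      ∀ τ ε : ℝ, 0 < τ → 0 < ε →
        ∃ B : Set (EuclideanSpace ℝ (Fin k)), MeasurableSet B ∧
          p Bᶜ ≤ ENNReal.ofReal τ ∧
          ∃ L : ℕ, ∀ ℓ, L ≤ ℓ →
            (∀ x ∈ B, ∀ y ∈ B,
              |dist x y ^ s - dist (κ ℓ x) (κ ℓ y) ^ s| ≤ ε) ∧
            (∀ x y, (x, y) ∉ B ×ˢ B →
              dist (κ ℓ x) (κ ℓ y) ^ s ≤ dist x y ^ s + ε) := by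
  refine ⟨cubeQuantizer,
    fun ℓ => ⟨measurable_cubeQuantizer ℓ, finite_range_cubeQuantizer ℓ⟩,
    iSup_comap_cubeQuantizer, fun τ ε hτ hε => ?_⟩
  obtain ⟨n, hn⟩ := ((tendsto_measure_compl_closedBall_nat p 0).eventually
    (ge_mem_nhds (ENNReal.ofReal_pos.2 hτ))).exists
  obtain ⟨L, hL⟩ := eventually_atTop.1
    ((eventually_abs_dist_rpow_sub_dist_cubeQuantizer_rpow_le (ι := Fin k) hs.le hε n).and
      (eventually_dist_cubeQuantizer_rpow_le (ι := Fin k) hs hε))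
  exact ⟨closedBall 0 n, measurableSet_closedBall, hn, L,
    fun ℓ hℓ => ⟨(hL ℓ hℓ).1, fun x y _ => (hL ℓ hℓ).2 x y⟩⟩
end

section
/- Let P^{(n)} be the distribution induced by an (n, R, R_c, ∞) fixed-length code for an i.i.d. source p_X^{⊗n} on a finite alphabet X: X^n ∼ p_X^{⊗n}, J uniform on [2^{nR_c}] independent of X^n, M ∈ [2^{nR}]. For any reals ε_1, ε_2 > 0 with ε_1 + ε_2 < H(X) − R, the probability under P^{(n)} that the information density satisfies i_{P^{(n)}}(M, J) − i_{P^{(n)}}(X^n, J) > −n(H(X) − R − ε_1 − ε_2) tends to 0 as n → ∞, where i_P(w) = −log P(w). -/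
/-!
The event is contained in the union of `{i(M,J) > n(R + ε₁) + log |𝓙|}` and
`{i(Xⁿ,J) < n(H(X) - ε₂) + log |𝓙|}`. A finite measure gives mass less than `2^{-c}` to every
atom of self-information above `c`, so the first event has probability at most
`|𝓜| |𝓙| 2^{-n(R+ε₁)} / |𝓙| ≤ 2^{-nε₁}`. Since `J` is uniform and independent of `Xⁿ`, almost
surely `i(Xⁿ,J) = ∑ᵢ i_p(Xᵢ) + log |𝓙|`, and Chebyshev's inequality for this i.i.d. sum, whose
mean is `n H(X)`, bounds the second event by `Var[i_p] / (n ε₂²)`.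
-/

open MeasureTheory Real Filter

/-- The uniform distribution on a finite type. -/
noncomputable def unif (α : Type*) [Fintype α] [MeasurableSpace α] : Measure α :=
  (Fintype.card α : ENNReal)⁻¹ • Measure.count

/-- Self-information i_ν(a) = −log ν({a}) (base 2). -/
noncomputable def iDen {α : Type*} [MeasurableSpace α] (ν : Measure α) (a : α) : ℝ :=
  -Real.logb 2 ((ν {a}).toReal)

open ProbabilityTheory Topology

lemma measure_singleton_le_of_lt_iDen {α : Type*} [MeasurableSpace α] (ν : Measure α)
    [IsFiniteMeasure ν] {c : ℝ} {a : α} (h : c < iDen ν a) :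
    ν {a} ≤ ENNReal.ofReal (2 ^ (-c)) := by
  rcases eq_or_ne (ν {a}) 0 with h0 | h0
  · simp [h0]
  rw [ENNReal.le_ofReal_iff_toReal_le (measure_ne_top ν _) (by positivity)]
  have hpos : 0 < (ν {a}).toReal := ENNReal.toReal_pos h0 (measure_ne_top ν _)
  exact ((Real.logb_lt_iff_lt_rpow one_lt_two hpos).1 (by rw [iDen] at h; linarith)).le

lemma measure_lt_iDen_le {α : Type*} [Fintype α] [MeasurableSpace α] [MeasurableSingletonClass α]
    (ν : Measure α) [IsFiniteMeasure ν] (c : ℝ) :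
    ν {a | c < iDen ν a} ≤ Fintype.card α * ENNReal.ofReal (2 ^ (-c)) := by
  classical
  calc ν {a | c < iDen ν a} = ∑ a ∈ Finset.univ.filter (c < iDen ν ·), ν {a} := by simp
    _ ≤ ∑ _a ∈ Finset.univ.filter (c < iDen ν ·), ENNReal.ofReal (2 ^ (-c)) :=
      Finset.sum_le_sum fun a ha ↦ measure_singleton_le_of_lt_iDen ν (Finset.mem_filter.1 ha).2
    _ ≤ Fintype.card α * ENNReal.ofReal (2 ^ (-c)) := by
      rw [Finset.sum_const, nsmul_eq_mul]
      gcongr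
      exact Finset.card_filter_le _ _

lemma unif_singleton {α : Type*} [Fintype α] [MeasurableSpace α] [MeasurableSingletonClass α]
    (a : α) : unif α {a} = (Fintype.card α : ENNReal)⁻¹ := by
  simp [unif]

instance isProbabilityMeasure_unif {α : Type*} [Fintype α] [Nonempty α] [MeasurableSpace α]
    [MeasurableSingletonClass α] :
    IsProbabilityMeasure (unif α) :=
  ⟨by simp [unif, ENNReal.inv_mul_cancel]⟩

lemma iDen_prod_unif {α β : Type*} [MeasurableSpace α] [Fintype β] [Nonempty β]
    [MeasurableSpace β] [MeasurableSingletonClass β] (ν : Measure α) [IsFiniteMeasure ν] {x : α}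
    (hx : ν {x} ≠ 0) (j : β) :
    iDen (ν.prod (unif β)) (x, j) = iDen ν x + Real.logb 2 (Fintype.card β) := by
  have hpos : 0 < (ν {x}).toReal := ENNReal.toReal_pos hx (measure_ne_top ν _)
  rw [iDen, iDen, ← Set.singleton_prod_singleton, Measure.prod_prod, unif_singleton,
    ENNReal.toReal_mul, ENNReal.toReal_inv, ENNReal.toReal_natCast, ← div_eq_mul_inv,
    Real.logb_div hpos.ne' (by positivity)]
  ring

lemma iDen_pi {ι : Type*} [Fintype ι] {α : ι → Type*} [∀ i, MeasurableSpace (α i)]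
    (p : ∀ i, Measure (α i)) [∀ i, IsFiniteMeasure (p i)] {x : ∀ i, α i}
    (hx : Measure.pi p {x} ≠ 0) : iDen (Measure.pi p) x = ∑ i, iDen (p i) (x i) := by
  rw [Measure.pi_singleton, Finset.prod_ne_zero_iff] at hx
  simp only [iDen, Measure.pi_singleton, ENNReal.toReal_prod, Finset.sum_neg_distrib]
  rw [Real.logb_prod _ _ fun i _ ↦ (ENNReal.toReal_pos (hx i (Finset.mem_univ i))
    (measure_ne_top _ _)).ne']

lemma integral_iDen {α : Type*} [Fintype α] [MeasurableSpace α] [MeasurableSingletonClass α]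
    (p : Measure α) [IsFiniteMeasure p] : p[iDen p] = entropy p := by
  simp [integral_fintype, iDen, entropy, measureReal_def, Finset.sum_neg_distrib]

lemma measure_pi_sum_le_mul_sub_le {Ω : Type*} [MeasurableSpace Ω] (p : Measure Ω)
    [IsProbabilityMeasure p] {f : Ω → ℝ} (hf : MemLp f 2 p) {n : ℕ} (hn : 0 < n) {ε : ℝ}
    (hε : 0 < ε) :
    (Measure.pi fun _ : Fin n ↦ p) {x | ∑ i, f (x i) ≤ n * (p[f] - ε)}
      ≤ ENNReal.ofReal (Var[f; p] / (n * ε ^ 2)) := by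
  set Pn := Measure.pi fun _ : Fin n ↦ p
  set S : (Fin n → Ω) → ℝ := ∑ i, fun x ↦ f (x i) with hS
  have hfi : ∀ i, MemLp (fun x : Fin n → Ω ↦ f (x i)) 2 Pn := fun i ↦
    hf.comp_measurePreserving (measurePreserving_eval _ i)
  have hmean : Pn[S] = (n : ℝ) * p[f] := by
    simp only [hS, Finset.sum_apply]
    rw [integral_finsetSum _ fun i _ ↦ (hfi i).integrable one_le_two]
    simp [Pn, integral_comp_eval (μ := fun _ : Fin n ↦ p) (X := fun _ ↦ Ω) hf.1]
  have hvar : Var[S; Pn] = (n : ℝ) * Var[f; p] := by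
    rw [hS, variance_sum_pi fun _ ↦ hf]
    simp
  have hnε : (0 : ℝ) < n * ε := by positivity
  calc Pn {x | ∑ i, f (x i) ≤ n * (p[f] - ε)} ≤ Pn {x | n * ε ≤ |S x - Pn[S]|} := by
        refine measure_mono fun x (hx : ∑ i, f (x i) ≤ _) ↦ ?_
        have hSx : S x = ∑ i, f (x i) := by simp [hS]
        show (n : ℝ) * ε ≤ |S x - Pn[S]|
        rw [hmean, abs_sub_comm, le_abs]
        exact Or.inl (by linarith)
    _ ≤ ENNReal.ofReal (Var[S; Pn] / (n * ε) ^ 2) :=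
        meas_ge_le_variance_div_sq (memLp_finsetSum' _ fun i _ ↦ hfi i) hnε
    _ = ENNReal.ofReal (Var[f; p] / (n * ε ^ 2)) := by
        rw [hvar]
        congr 1
        field_simp

lemma measure_iDen_pi_prod_unif_lt_le {X 𝓙 : Type*} [Fintype X] [MeasurableSpace X]
    [MeasurableSingletonClass X] [Fintype 𝓙] [Nonempty 𝓙] [MeasurableSpace 𝓙]
    [MeasurableSingletonClass 𝓙] (p : Measure X) [IsProbabilityMeasure p] {n : ℕ} (hn : 0 < n)
    {ε : ℝ} (hε : 0 < ε) :
    ((Measure.pi fun _ : Fin n ↦ p).prod (unif 𝓙))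
        {w | iDen ((Measure.pi fun _ : Fin n ↦ p).prod (unif 𝓙)) w
          < n * (entropy p - ε) + Real.logb 2 (Fintype.card 𝓙)}
      ≤ ENNReal.ofReal (Var[iDen p; p] / (n * ε ^ 2)) := by
  set Pn := Measure.pi fun _ : Fin n ↦ p
  calc _ ≤ (Pn.prod (unif 𝓙)) ({x | ∑ i, iDen p (x i) ≤ n * (p[iDen p] - ε)} ×ˢ Set.univ) := by
        -- only almost surely: on null atoms `iDen` takes the junk value `-logb 2 0 = 0`
        refine measure_mono_ae ((ae_iff_of_countable).2 fun ⟨x, j⟩ hxj hlt ↦ ?_)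
        have hx : Pn {x} ≠ 0 := fun h ↦ hxj (by
          rw [← Set.singleton_prod_singleton, Measure.prod_prod, h, zero_mul])
        replace hlt : iDen (Pn.prod (unif 𝓙)) (x, j) < _ := hlt
        rw [iDen_prod_unif Pn hx, iDen_pi _ hx] at hlt
        refine Set.mk_mem_prod ?_ trivial
        rw [Set.mem_ofPred_eq, integral_iDen]
        linarith
    _ = Pn {x | ∑ i, iDen p (x i) ≤ n * (p[iDen p] - ε)} := by
        rw [Measure.prod_prod, measure_univ, mul_one]
    _ ≤ _ := measure_pi_sum_le_mul_sub_le p .of_discrete hn hε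

lemma mul_two_rpow_neg_le {M C t s : ℝ} (hM : M ≤ 2 ^ t) (hC : 0 < C) :
    M * C * 2 ^ (-(t + s + Real.logb 2 C)) ≤ 2 ^ (-s) := by
  rw [neg_add, Real.rpow_add two_pos, Real.rpow_neg two_pos.le (Real.logb 2 C),
    Real.rpow_logb two_pos (by norm_num) hC, neg_add, Real.rpow_add two_pos,
    Real.rpow_neg two_pos.le t]
  calc M * C * ((2 ^ t)⁻¹ * 2 ^ (-s) * C⁻¹) = M * (2 ^ t)⁻¹ * 2 ^ (-s) := by field_simp
    _ ≤ 2 ^ t * (2 ^ t)⁻¹ * 2 ^ (-s) := by gcongr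
    _ = 2 ^ (-s) := by field_simp

lemma measure_iDen_sub_iDen_gt_le {X 𝓙 𝓜 : Type*} [Fintype X] [MeasurableSpace X]
    [MeasurableSingletonClass X] [Fintype 𝓙] [Nonempty 𝓙] [MeasurableSpace 𝓙]
    [MeasurableSingletonClass 𝓙] [Fintype 𝓜] [MeasurableSpace 𝓜] [MeasurableSingletonClass 𝓜]
    (p : Measure X) [IsProbabilityMeasure p] {n : ℕ} (hn : 0 < n) {R : ℝ}
    (h𝓜 : (Fintype.card 𝓜 : ℝ) ≤ 2 ^ ((n : ℝ) * R))
    (μ : Measure ((Fin n → X) × 𝓙 × 𝓜)) [IsFiniteMeasure μ]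
    (hXJ : μ.map (fun ω ↦ (ω.1, ω.2.1)) = (Measure.pi fun _ ↦ p).prod (unif 𝓙))
    (ε₁ : ℝ) {ε₂ : ℝ} (hε₂ : 0 < ε₂) :
    μ {ω | iDen (μ.map fun ω' ↦ (ω'.2.2, ω'.2.1)) (ω.2.2, ω.2.1)
        - iDen (μ.map fun ω' ↦ (ω'.1, ω'.2.1)) (ω.1, ω.2.1) > -(n * (entropy p - R - ε₁ - ε₂))}
      ≤ ENNReal.ofReal (2 ^ (-(n * ε₁))) + ENNReal.ofReal (Var[iDen p; p] / (n * ε₂ ^ 2)) := by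
  set φM := fun ω : (Fin n → X) × 𝓙 × 𝓜 ↦ (ω.2.2, ω.2.1)
  set φX := fun ω : (Fin n → X) × 𝓙 × 𝓜 ↦ (ω.1, ω.2.1)
  have hφM : Measurable φM := by fun_prop
  have hφX : Measurable φX := by fun_prop
  set a := n * R + n * ε₁ + Real.logb 2 (Fintype.card 𝓙)
  set b := n * (entropy p - ε₂) + Real.logb 2 (Fintype.card 𝓙)
  have hsplit : {ω | iDen (μ.map φM) (φM ω) - iDen (μ.map φX) (φX ω)
        > -(n * (entropy p - R - ε₁ - ε₂))}
      ⊆ φM ⁻¹' {w | a < iDen (μ.map φM) w} ∪ φX ⁻¹' {w | iDen (μ.map φX) w < b} := by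
    intro ω hω
    by_contra! h
    simp only [Set.mem_union, Set.mem_preimage, Set.mem_ofPred_eq, not_or, not_lt] at h hω
    linarith
  have hM : μ (φM ⁻¹' {w | a < iDen (μ.map φM) w}) ≤ ENNReal.ofReal (2 ^ (-(n * ε₁))) := by
    rw [← Measure.map_apply hφM .of_discrete]
    refine (measure_lt_iDen_le _ a).trans ?_
    rw [Fintype.card_prod, ← ENNReal.ofReal_natCast, ← ENNReal.ofReal_mul (by positivity)]
    refine ENNReal.ofReal_le_ofReal ?_
    push_cast
    exact mul_two_rpow_neg_le h𝓜 (by exact_mod_cast Fintype.card_pos)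
  have hX : μ (φX ⁻¹' {w | iDen (μ.map φX) w < b})
      ≤ ENNReal.ofReal (Var[iDen p; p] / (n * ε₂ ^ 2)) := by
    rw [← Measure.map_apply hφX .of_discrete, hXJ]
    exact measure_iDen_pi_prod_unif_lt_le p hn hε₂
  calc _ ≤ _ := measure_mono hsplit
    _ ≤ _ := measure_union_le _ _
    _ ≤ _ := add_le_add hM hX

lemma tendsto_ofReal_two_rpow_neg_add_div {ε : ℝ} (hε : 0 < ε) (V c : ℝ) :
    Tendsto (fun n : ℕ ↦ ENNReal.ofReal (2 ^ (-(n * ε))) + ENNReal.ofReal (V / (n * c)))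
      atTop (𝓝 0) := by
  have hexp : Tendsto (fun n : ℕ ↦ (2 : ℝ) ^ (-(n * ε))) atTop (𝓝 0) :=
    (tendsto_rpow_atBot_of_base_gt_one 2 one_lt_two).comp
      (tendsto_neg_atTop_atBot.comp (tendsto_natCast_atTop_atTop.atTop_mul_const hε))
  have hdiv : Tendsto (fun n : ℕ ↦ V / (n * c)) atTop (𝓝 0) := by
    simpa [div_div] using (tendsto_const_div_atTop_nhds_zero_nat V).div_const c
  simpa using (ENNReal.tendsto_ofReal hexp).add (ENNReal.tendsto_ofReal hdiv)

theorem stmt_14_general {X : Type*} [Fintype X] [MeasurableSpace X] [MeasurableSingletonClass X]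
    (p : Measure X) [IsProbabilityMeasure p]
    (R Rc : ℝ) (hRc : 0 ≤ Rc)
    (μ : (n : ℕ) → Measure ((Fin n → X) ×
      Fin (Nat.floor ((2 : ℝ) ^ ((n : ℝ) * Rc))) ×
      Fin (Nat.floor ((2 : ℝ) ^ ((n : ℝ) * R)))))
    (hprob : ∀ n, IsProbabilityMeasure (μ n))
    -- X^n is i.i.d. ∼ p and J is uniform on [2^{nR_c}] and independent of X^n
    (hXJ : ∀ n, (μ n).map (fun ω => (ω.1, ω.2.1)) =
      (Measure.pi fun _ => p).prod (unif (Fin (Nat.floor ((2 : ℝ) ^ ((n : ℝ) * Rc))))))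
    (ε₁ ε₂ : ℝ) (hε₁ : 0 < ε₁) (hε₂ : 0 < ε₂) :
    Tendsto (fun n => μ n
      {ω | iDen ((μ n).map (fun ω' => (ω'.2.2, ω'.2.1))) (ω.2.2, ω.2.1)
         - iDen ((μ n).map (fun ω' => (ω'.1, ω'.2.1))) (ω.1, ω.2.1)
         > -(n * (entropy p - R - ε₁ - ε₂))})
      atTop (nhds 0) := by
  have hbound : ∀ n : ℕ, 0 < n → μ n _ ≤ _ := fun n hn ↦ by
    have := hprob n
    have : Nonempty (Fin ⌊(2 : ℝ) ^ ((n : ℝ) * Rc)⌋₊) :=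
      ⟨⟨0, Nat.floor_pos.2 (Real.one_le_rpow one_le_two (by positivity))⟩⟩
    exact measure_iDen_sub_iDen_gt_le p hn (by simpa using Nat.floor_le (by positivity))
      (μ n) (hXJ n) ε₁ hε₂
  exact tendsto_of_tendsto_of_tendsto_of_le_of_le' tendsto_const_nhds
    (tendsto_ofReal_two_rpow_neg_add_div hε₁ _ _) (.of_forall fun _ ↦ zero_le)
    ((eventually_gt_atTop 0).mono hbound)

/-- For an (n, R, R_c, ∞) fixed-length code for an i.i.d. source p^{⊗n} on a finite
alphabet, with R < H(X) and ε₁ + ε₂ < H(X) − R, the probability that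
i(M,J) − i(X^n,J) > −n(H(X) − R − ε₁ − ε₂) vanishes as n → ∞. -/
theorem stmt_14 {X : Type*} [Fintype X] [MeasurableSpace X] [MeasurableSingletonClass X]
    (p : Measure X) [IsProbabilityMeasure p]
    (R Rc : ℝ) (hR : 0 ≤ R) (hRc : 0 ≤ Rc) (hRH : R < entropy p)
    (μ : (n : ℕ) → Measure ((Fin n → X) ×
      Fin (Nat.floor ((2 : ℝ) ^ ((n : ℝ) * Rc))) ×
      Fin (Nat.floor ((2 : ℝ) ^ ((n : ℝ) * R)))))
    (hprob : ∀ n, IsProbabilityMeasure (μ n))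
    -- X^n is i.i.d. ∼ p and J is uniform on [2^{nR_c}] and independent of X^n
    (hXJ : ∀ n, (μ n).map (fun ω => (ω.1, ω.2.1)) =
      (Measure.pi fun _ => p).prod (unif (Fin (Nat.floor ((2 : ℝ) ^ ((n : ℝ) * Rc))))))
    (ε₁ ε₂ : ℝ) (hε₁ : 0 < ε₁) (hε₂ : 0 < ε₂) (hsum : ε₁ + ε₂ < entropy p - R) :
    Tendsto (fun n => μ n
      {ω | iDen ((μ n).map (fun ω' => (ω'.2.2, ω'.2.1))) (ω.2.2, ω.2.1)
         - iDen ((μ n).map (fun ω' => (ω'.1, ω'.2.1))) (ω.1, ω.2.1)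
         > -(n * (entropy p - R - ε₁ - ε₂))})
      atTop (nhds 0) :=
  stmt_14_general p R Rc hRc μ hprob hXJ ε₁ ε₂ hε₁ hε₂
end
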